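/- arXiv:2404.02688 — 6 statements merged into one kernel-verified Lean document; each statement's English description precedes it below -/
import Mathlib

section
/- In a symmetric monoidal category C whose monoidal unit I is terminal, there is a natural bijection between optic morphisms from the pair (X, X') to the pair (I, I) and morphisms X → X' in C; that is, Optic(C)((X,X'), (I,I)) ≅ C(X, X'). -/
open CategoryTheory MonoidalCategory

universe v u

variable {C : Type u} [Category.{v} C] [MonoidalCategory C]

/-- A representative of an optic `(X, X') → (Y, Y')` over the self-action of `C`:
a residual `M`, a forward pass `X ⟶ M ⊗ Y` and a backward pass `M ⊗ Y' ⟶ X'`. -/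
structure OpticRep (X X' Y Y' : C) where
  M : C
  f : X ⟶ M ⊗ Y
  f' : M ⊗ Y' ⟶ X'

/-- The sliding relation whose generated equivalence is the coend identification. -/
def OpticRel (X X' Y Y' : C) : OpticRep X X' Y Y' → OpticRep X X' Y Y' → Prop :=
  fun r₁ r₂ => ∃ h : r₁.M ⟶ r₂.M,
    r₂.f = r₁.f ≫ (h ▷ Y) ∧ r₁.f' = (h ▷ Y') ≫ r₂.f'

/-- Hom-sets of the category `Optic(C)`. -/
def OpticHom (X X' Y Y' : C) : Type _ := Quot (OpticRel X X' Y Y')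

/-- if the monoidal unit of `C` is terminal, then optics
`(X, X') → (I, I)` are in natural bijection with morphisms `X ⟶ X'`, the
bijection sending the class of `(M, f, f')` to the composite `f ≫ f'`. -/
theorem optic_costates_equiv_hom (hI : Limits.IsTerminal (𝟙_ C)) (X X' : C) :
    ∃ e : OpticHom X X' (𝟙_ C) (𝟙_ C) ≃ (X ⟶ X'),
      ∀ r : OpticRep X X' (𝟙_ C) (𝟙_ C),
        e (Quot.mk _ r) = r.f ≫ r.f' := by
  refine ⟨{ toFun := Quot.lift (fun r => r.f ≫ r.f') ?_
            invFun := fun g => Quot.mk _ ⟨X', g ≫ (ρ_ X').inv, (ρ_ X').hom⟩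
            left_inv := ?_
            right_inv := ?_ }, fun r => rfl⟩
  · rintro a b ⟨h, h1, h2⟩
    show a.f ≫ a.f' = b.f ≫ b.f'
    rw [h1, h2, Category.assoc]
  · refine Quot.ind fun r => ?_
    refine (Quot.sound ⟨(ρ_ r.M).inv ≫ r.f', ?_, ?_⟩).symm
    · show (r.f ≫ r.f') ≫ (ρ_ X').inv = r.f ≫ _
      rw [MonoidalCategory.comp_whiskerRight, Category.assoc,
        MonoidalCategory.rightUnitor_inv_naturality r.f']
      simp
    · show r.f' = ((ρ_ r.M).inv ≫ r.f') ▷ 𝟙_ C ≫ (ρ_ X').hom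
      rw [MonoidalCategory.comp_whiskerRight, Category.assoc,
        MonoidalCategory.rightUnitor_naturality r.f']
      simp
  · intro g
    simp
end

section
/- In a symmetric monoidal category C whose monoidal unit I is terminal, there is a natural bijection Optic(C)((I,I), (X,X')) ≅ C(I, X) between states of the optic (X,X') and points of X. -/
open CategoryTheory MonoidalCategory

universe v u

variable {C : Type u} [Category.{v} C] [MonoidalCategory C]

/-- if the monoidal unit of `C` is terminal, then optic states
`(I, I) → (X, X')` are in natural bijection with points `I ⟶ X` of `X`: the
bijection discards the residual (using the terminal map `M ⟶ I`) and the
backward pass. -/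
theorem optic_states_equiv_points (hI : Limits.IsTerminal (𝟙_ C)) (X X' : C) :
    ∃ e : OpticHom (𝟙_ C) (𝟙_ C) X X' ≃ (𝟙_ C ⟶ X),
      ∀ r : OpticRep (𝟙_ C) (𝟙_ C) X X',
        e (Quot.mk _ r) = r.f ≫ (hI.from r.M ▷ X) ≫ (λ_ X).hom := by
  classical
  let fwd : OpticHom (𝟙_ C) (𝟙_ C) X X' → (𝟙_ C ⟶ X) :=
    Quot.lift (fun r => r.f ≫ (hI.from r.M ▷ X) ≫ (λ_ X).hom) (by
      rintro r₁ r₂ ⟨h, hf, hf'⟩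
      simp only [hf, Category.assoc]
      rw [← comp_whiskerRight_assoc, hI.hom_ext (h ≫ hI.from r₂.M) (hI.from r₁.M)])
  let bwd : (𝟙_ C ⟶ X) → OpticHom (𝟙_ C) (𝟙_ C) X X' :=
    fun g => Quot.mk _ ⟨𝟙_ C, g ≫ (λ_ X).inv, hI.from _⟩
  refine ⟨⟨fwd, bwd, ?_, ?_⟩, fun r => rfl⟩
  · intro q
    refine Quot.inductionOn q (fun r => ?_)
    refine (Quot.sound ⟨hI.from r.M, ?_, hI.hom_ext _ _⟩).symm
    simp [fwd]
  · intro g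
    simp only [fwd, bwd]
    rw [hI.hom_ext (hI.from (𝟙_ C)) (𝟙 _)]
    simp
end

section
/- For a closed symmetric monoidal category C, there is a natural isomorphism Optic((X,X'), (Y,Y')) ≅ C(X, Y ⊗ [Y', X']), where [−,−] denotes the internal hom. -/
open CategoryTheory MonoidalCategory

universe v u

variable {C : Type u} [Category.{v} C] [MonoidalCategory C] [SymmetricCategory C]
  [MonoidalClosed C]

def opticToHom (X X' Y Y' : C) (r : OpticRep X X' Y Y') : X ⟶ Y ⊗ (ihom Y').obj X' :=
  r.f ≫ (β_ r.M Y).hom ≫ (Y ◁ MonoidalClosed.curry ((β_ Y' r.M).hom ≫ r.f'))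

lemma opticToHom_rel (X X' Y Y' : C) (r₁ r₂ : OpticRep X X' Y Y')
    (h : OpticRel X X' Y Y' r₁ r₂) :
    opticToHom X X' Y Y' r₁ = opticToHom X X' Y Y' r₂ := by
  obtain ⟨h, hf, hf'⟩ := h
  unfold opticToHom
  rw [hf, hf']
  have hc : MonoidalClosed.curry ((β_ Y' r₁.M).hom ≫ (h ▷ Y') ≫ r₂.f')
      = h ≫ MonoidalClosed.curry ((β_ Y' r₂.M).hom ≫ r₂.f') := by
    rw [← MonoidalClosed.curry_natural_left]
    congr 1
    rw [← Category.assoc, ← Category.assoc]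
    congr 1
    exact (BraidedCategory.braiding_naturality_right Y' h).symm
  rw [hc, MonoidalCategory.whiskerLeft_comp]
  simp only [Category.assoc]
  slice_rhs 2 3 => rw [BraidedCategory.braiding_naturality_left]
  simp [Category.assoc]

/-- over a closed symmetric monoidal category there is a natural
bijection `Optic((X,X'),(Y,Y')) ≅ C(X, Y ⊗ [Y', X'])`, obtained by currying the
backward pass of a representative and eliminating the coend. -/
theorem optics_closed_monoidal (X X' Y Y' : C) :
    ∃ e : OpticHom X X' Y Y' ≃ (X ⟶ Y ⊗ (ihom Y').obj X'),
      ∀ r : OpticRep X X' Y Y',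
        e (Quot.mk _ r) =
          r.f ≫ (β_ r.M Y).hom ≫
            (Y ◁ MonoidalClosed.curry ((β_ Y' r.M).hom ≫ r.f')) := by
  refine ⟨{
    toFun := Quot.lift (opticToHom X X' Y Y') (opticToHom_rel X X' Y Y')
    invFun := fun g => Quot.mk _ ⟨(ihom Y').obj X', g ≫ (β_ Y _).hom,
      (β_ _ Y').hom ≫ MonoidalClosed.uncurry (𝟙 _)⟩
    left_inv := ?_
    right_inv := ?_ }, fun r => rfl⟩
  · intro q
    induction q using Quot.ind with
    | _ r =>
      refine (Quot.sound ⟨MonoidalClosed.curry ((β_ Y' r.M).hom ≫ r.f'), ?_, ?_⟩).symm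
      · show (opticToHom X X' Y Y' r ≫ (β_ Y _).hom : X ⟶ _) = _
        unfold opticToHom
        simp only [Category.assoc]
        congr 1
        rw [BraidedCategory.braiding_naturality_right, ← Category.assoc,
          SymmetricCategory.symmetry, Category.id_comp]
      · show r.f' = _ ▷ Y' ≫ (β_ _ Y').hom ≫ MonoidalClosed.uncurry (𝟙 _)
        rw [← Category.assoc, BraidedCategory.braiding_naturality_left,
          Category.assoc, ← MonoidalClosed.uncurry_natural_left,
          Category.comp_id, MonoidalClosed.uncurry_curry, ← Category.assoc,
          SymmetricCategory.symmetry, Category.id_comp]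
  · intro g
    show opticToHom X X' Y Y' _ = g
    unfold opticToHom
    simp only [Category.assoc]
    rw [← Category.assoc ((β_ Y _).hom), SymmetricCategory.symmetry, Category.id_comp]
    simp [MonoidalClosed.curry_natural_left, MonoidalClosed.curry_uncurry]
end

section
/- The iteration functor I : Optic(C) → Set is symmetric lax monoidal, with laxator ∇ : I(X,X') × I(Y,Y') → I(X⊗Y, X'⊗Y') given (up to symmetry isomorphisms) by (M, x₀, i) ∇ (M', x₀', i') = (M⊗M', x₀ ⊗ x₀', i ⊗ i'); this laxator satisfies the associativity and unit coherence conditions for a lax monoidal functor. -/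
/-! The laxator is the monoidal structure `tensorμ`, `(λ_ 𝟙).inv` of `⊗ : C × C ⥤ C`, applied
to the initial states and to the update maps of two iteration data. Naturality of `tensorμ` makes
it respect the coend relation. Each coherence law is witnessed by the structural isomorphism on
the residuals `M` that matches the one on the boundaries: the associativity and unit axioms of
`tensorμ` give the associator and unitor cases, and the braiding case uses that in a symmetric
category `tensorμ` is compatible with the braiding and is inverse to the opposite interchange. -/

open CategoryTheory MonoidalCategory

universe v u

variable {C : Type u} [Category.{v} C] [MonoidalCategory C] [SymmetricCategory C]

structure IterRep (X X' : C) where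
  M : C
  x₀ : 𝟙_ C ⟶ M ⊗ X
  i : M ⊗ X' ⟶ M ⊗ X

def IterRel (X X' : C) : IterRep X X' → IterRep X X' → Prop :=
  fun j₁ j₂ => ∃ h : j₁.M ⟶ j₂.M,
    j₂.x₀ = j₁.x₀ ≫ (h ▷ X) ∧ j₁.i ≫ (h ▷ X) = (h ▷ X') ≫ j₂.i

def IterQuot (X X' : C) : Type _ := Quot (IterRel X X')

/-- The laxator on representatives: `(M,x₀,i) ∇ (M',x₀',i') = (M⊗M', x₀⊗x₀', i⊗i')`
up to the symmetry (middle-four interchange) isomorphisms. -/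
def nablaRep {X X' Y Y' : C} (a : IterRep X X') (b : IterRep Y Y') :
    IterRep (X ⊗ Y) (X' ⊗ Y') where
  M := a.M ⊗ b.M
  x₀ := (λ_ (𝟙_ C)).inv ≫ (a.x₀ ⊗ₘ b.x₀) ≫ tensorμ a.M X b.M Y
  i := tensorμ a.M b.M X' Y' ≫ (a.i ⊗ₘ b.i) ≫ tensorμ a.M X b.M Y

/-- The unit element of `I(𝟙, 𝟙)`. -/
def unitIter : IterRep (𝟙_ C) (𝟙_ C) := ⟨𝟙_ C, (λ_ (𝟙_ C)).inv, 𝟙 _⟩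

/-- The optic representative of a pair of structural isomorphisms, with trivial
residual. -/
def isoRep {P P' Q Q' : C} (u : P ≅ Q) (u' : Q' ≅ P') :
    Σ M : C, (P ⟶ M ⊗ Q) × (M ⊗ Q' ⟶ P') :=
  ⟨𝟙_ C, u.hom ≫ (λ_ Q).inv, (λ_ Q').hom ≫ u'.hom⟩

/-- Action of such an optic representative on iteration representatives
(the functorial action of `I`). -/
def iterMapIso {P P' Q Q' : C} (r : Σ M : C, (P ⟶ M ⊗ Q) × (M ⊗ Q' ⟶ P'))
    (j : IterRep P P') : IterRep Q Q' where
  M := j.M ⊗ r.1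
  x₀ := j.x₀ ≫ (j.M ◁ r.2.1) ≫ (α_ j.M r.1 Q).inv
  i := (α_ j.M r.1 Q').hom ≫ (j.M ◁ r.2.2) ≫ j.i ≫ (j.M ◁ r.2.1) ≫ (α_ j.M r.1 Q).inv

open BraidedCategory

section Braided

variable {D : Type*} [Category D] [MonoidalCategory D] [BraidedCategory D]

theorem whiskerRight_tensorHom_whiskerRight_comp_tensorμ {A A' B B' : D} (f : A ⟶ A')
    (g : B ⟶ B') (X Y : D) :
    (f ▷ X ⊗ₘ g ▷ Y) ≫ tensorμ A' X B' Y = tensorμ A X B Y ≫ (f ⊗ₘ g) ▷ (X ⊗ Y) := by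
  simpa using tensorμ_natural f (𝟙 X) g (𝟙 Y)

theorem tensorμ_comp_leftUnitor_tensorHom (X₁ X₂ : D) :
    tensorμ (𝟙_ D) (𝟙_ D) X₁ X₂ ≫ ((λ_ X₁).hom ⊗ₘ (λ_ X₂).hom) =
      (λ_ (𝟙_ D)).hom ▷ (X₁ ⊗ X₂) ≫ (λ_ (X₁ ⊗ X₂)).hom := by
  rw [tensor_left_unitality, hom_inv_whiskerRight_assoc]

theorem tensorμ_comp_rightUnitor_tensorHom (X₁ X₂ : D) :
    tensorμ X₁ X₂ (𝟙_ D) (𝟙_ D) ≫ ((ρ_ X₁).hom ⊗ₘ (ρ_ X₂).hom) =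
      (X₁ ⊗ X₂) ◁ (λ_ (𝟙_ D)).hom ≫ (ρ_ (X₁ ⊗ X₂)).hom := by
  rw [tensor_right_unitality, whiskerLeft_hom_inv_assoc]

theorem tensorHom_comp_tensorμ_associativity {U V W X₁ X₂ Y₁ Y₂ Z₁ Z₂ : D} (f : U ⟶ X₁ ⊗ X₂)
    (g : V ⟶ Y₁ ⊗ Y₂) (k : W ⟶ Z₁ ⊗ Z₂) :
    (((f ⊗ₘ g) ≫ tensorμ X₁ X₂ Y₁ Y₂) ⊗ₘ k) ≫ tensorμ (X₁ ⊗ Y₁) (X₂ ⊗ Y₂) Z₁ Z₂ ≫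
        ((α_ X₁ Y₁ Z₁).hom ⊗ₘ (α_ X₂ Y₂ Z₂).hom) =
      (α_ U V W).hom ≫ (f ⊗ₘ ((g ⊗ₘ k) ≫ tensorμ Y₁ Y₂ Z₁ Z₂)) ≫
        tensorμ X₁ X₂ (Y₁ ⊗ Z₁) (Y₂ ⊗ Z₂) := by
  rw [← tensorHom_comp_whiskerRight, Category.assoc, tensor_associativity]
  monoidal

end Braided

theorem tensorμ_eq_tensorδ (A B P Q : C) : tensorμ A P B Q = tensorδ A B P Q := by
  simp [tensorμ, tensorδ, SymmetricCategory.braiding_swap_eq_inv_braiding]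

theorem braiding_comp_tensorμ (X₁ X₂ Y₁ Y₂ : C) :
    (β_ (X₁ ⊗ X₂) (Y₁ ⊗ Y₂)).hom ≫ tensorμ Y₁ Y₂ X₁ X₂ =
      tensorμ X₁ X₂ Y₁ Y₂ ≫ ((β_ X₁ Y₁).hom ⊗ₘ (β_ X₂ Y₂).hom) := by
  simp only [tensorμ, braiding_tensor_left_hom, braiding_tensor_right_hom,
    MonoidalCategory.tensorHom_def]
  -- the double crossing `(β_ X₁ Y₂).hom ≫ (β_ Y₂ X₁).hom` is where symmetry is needed
  calc
    _ = 𝟙 _ ⊗≫ X₁ ◁ (β_ X₂ Y₁).hom ▷ Y₂ ⊗≫ (β_ X₁ Y₁).hom ▷ (X₂ ⊗ Y₂) ⊗≫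
        (Y₁ ⊗ X₁) ◁ (β_ X₂ Y₂).hom ⊗≫
        Y₁ ◁ ((β_ X₁ Y₂).hom ≫ (β_ Y₂ X₁).hom) ▷ X₂ ⊗≫ 𝟙 _ := by monoidal
    _ = _ := by rw [SymmetricCategory.symmetry]; monoidal

theorem tensorμ_comp_braiding (A B P Q : C) :
    tensorμ A B P Q ≫ (β_ (A ⊗ P) (B ⊗ Q)).hom =
      ((β_ A B).hom ⊗ₘ (β_ P Q).hom) ≫ tensorμ B A Q P := by
  calc
    _ = tensorμ A B P Q ≫ (β_ (A ⊗ P) (B ⊗ Q)).hom ≫ tensorμ B Q A P ≫ tensorμ B A Q P := by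
      rw [tensorμ_eq_tensorδ B A Q P, tensorδ_tensorμ, Category.comp_id]
    _ = _ := by
      rw [reassoc_of% braiding_comp_tensorμ A P B Q, tensorμ_eq_tensorδ A B P Q,
        tensorμ_tensorδ_assoc]

omit [SymmetricCategory C] in
theorem iterRel_refl {X X' : C} (j : IterRep X X') : IterRel X X' j j :=
  ⟨𝟙 j.M, by simp, by simp⟩

theorem iterRel_nablaRep {X X' Y Y' : C} {a₁ a₂ : IterRep X X'} {b₁ b₂ : IterRep Y Y'}
    (ha : IterRel X X' a₁ a₂) (hb : IterRel Y Y' b₁ b₂) :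
    IterRel (X ⊗ Y) (X' ⊗ Y') (nablaRep a₁ b₁) (nablaRep a₂ b₂) := by
  obtain ⟨f, hfx, hfi⟩ := ha
  obtain ⟨g, hgx, hgi⟩ := hb
  refine ⟨f ⊗ₘ g, ?_, ?_⟩
  · simp only [nablaRep, hfx, hgx, Category.assoc,
      ← whiskerRight_tensorHom_whiskerRight_comp_tensorμ, tensorHom_comp_tensorHom_assoc]
  · simp only [nablaRep, Category.assoc, ← whiskerRight_tensorHom_whiskerRight_comp_tensorμ,
      tensorμ_natural_left_assoc, tensorHom_comp_tensorHom_assoc, hfi, hgi]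

omit [SymmetricCategory C] in
theorem iterRel_iterMapIso_isoRep {P P' Q Q' : C} (u : P ≅ Q) (u' : Q' ≅ P')
    {j : IterRep P P'} {k : IterRep Q Q'} (h : j.M ⟶ k.M)
    (hx : j.x₀ ≫ (h ⊗ₘ u.hom) = k.x₀) (hi : j.i ≫ (h ⊗ₘ u.hom) = (h ⊗ₘ u'.inv) ≫ k.i) :
    IterRel Q Q' (iterMapIso (isoRep u u') j) k := by
  simp only [tensorHom_def', Category.assoc] at hx hi
  have hk : h ▷ Q' ≫ k.i = j.M ◁ u'.hom ≫ j.i ≫ j.M ◁ u.hom ≫ h ▷ Q := by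
    rw [hi, whiskerLeft_hom_inv_assoc]
  refine ⟨(ρ_ j.M).hom ≫ h, ?_, ?_⟩
  · rw [← hx]
    dsimp only [iterMapIso, isoRep]
    monoidal
  · dsimp only [iterMapIso, isoRep]
    simp only [comp_whiskerRight, Category.assoc]
    rw [hk]
    monoidal

theorem iterRel_associator {X X' Y Y' Z Z' : C} (a : IterRep X X') (b : IterRep Y Y')
    (c : IterRep Z Z') :
    IterRel (X ⊗ (Y ⊗ Z)) (X' ⊗ (Y' ⊗ Z'))
      (iterMapIso (isoRep (α_ X Y Z) (α_ X' Y' Z').symm) (nablaRep (nablaRep a b) c))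
      (nablaRep a (nablaRep b c)) := by
  refine iterRel_iterMapIso_isoRep _ _ (α_ a.M b.M c.M).hom ?_ ?_
  · simp only [nablaRep, Category.assoc]
    rw [← whiskerRight_comp_tensorHom_assoc, tensorHom_comp_tensorμ_associativity]
    monoidal
  · simp only [nablaRep, Iso.symm_inv, Category.assoc]
    rw [← whiskerRight_comp_tensorHom_assoc, tensorHom_comp_tensorμ_associativity,
      associator_monoidal_assoc, whiskerLeft_comp_tensorHom_assoc]

theorem iterRel_leftUnitor {X X' : C} (a : IterRep X X') :
    IterRel X X' (iterMapIso (isoRep (λ_ X) (λ_ X').symm) (nablaRep unitIter a)) a := by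
  refine iterRel_iterMapIso_isoRep _ _ (λ_ a.M).hom ?_ ?_
  · simp only [nablaRep, unitIter, Category.assoc, tensorμ_comp_leftUnitor_tensorHom]
    monoidal
  · simp only [nablaRep, unitIter, Iso.symm_inv, Category.assoc, tensorμ_comp_leftUnitor_tensorHom,
      leftUnitor_monoidal_assoc]
    monoidal

theorem iterRel_rightUnitor {X X' : C} (a : IterRep X X') :
    IterRel X X' (iterMapIso (isoRep (ρ_ X) (ρ_ X').symm) (nablaRep a unitIter)) a := by
  refine iterRel_iterMapIso_isoRep _ _ (ρ_ a.M).hom ?_ ?_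
  · simp only [nablaRep, unitIter, Category.assoc, tensorμ_comp_rightUnitor_tensorHom]
    monoidal
  · simp only [nablaRep, unitIter, Iso.symm_inv, Category.assoc, tensorμ_comp_rightUnitor_tensorHom,
      rightUnitor_monoidal_assoc]
    monoidal

theorem iterRel_braiding {X X' Y Y' : C} (a : IterRep X X') (b : IterRep Y Y') :
    IterRel (Y ⊗ X) (Y' ⊗ X')
      (iterMapIso (isoRep (β_ X Y) (β_ X' Y').symm) (nablaRep a b)) (nablaRep b a) := by
  refine iterRel_iterMapIso_isoRep _ _ (β_ a.M b.M).hom ?_ ?_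
  · simp only [nablaRep, Category.assoc]
    rw [← braiding_comp_tensorμ, braiding_naturality_assoc, leftUnitor_inv_braiding_assoc,
      unitors_inv_equal]
  · simp only [nablaRep, Iso.symm_inv, Category.assoc]
    rw [← braiding_comp_tensorμ, braiding_naturality_assoc, reassoc_of% tensorμ_comp_braiding]

/-- the iteration functor `I : Optic(C) → Set` is symmetric lax
monoidal: the laxator `∇` descends to the coend quotients, and it satisfies the
associativity, left/right unit, and symmetry coherence conditions for a
symmetric lax monoidal functor (stated in the quotient, transported along the
`I`-image of the structural optics). -/
theorem iteration_lax_monoidal :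
    (∀ X X' Y Y' : C, ∃ lax : IterQuot X X' → IterQuot Y Y' → IterQuot (X ⊗ Y) (X' ⊗ Y'),
      ∀ (a : IterRep X X') (b : IterRep Y Y'),
        lax (Quot.mk _ a) (Quot.mk _ b) = Quot.mk _ (nablaRep a b)) ∧
    (∀ (X X' Y Y' Z Z' : C) (a : IterRep X X') (b : IterRep Y Y') (c : IterRep Z Z'),
      Quot.mk (IterRel _ _)
          (iterMapIso (isoRep (α_ X Y Z) (α_ X' Y' Z').symm)
            (nablaRep (nablaRep a b) c)) =
        Quot.mk _ (nablaRep a (nablaRep b c))) ∧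
    (∀ (X X' : C) (a : IterRep X X'),
      Quot.mk (IterRel _ _)
          (iterMapIso (isoRep (λ_ X) (λ_ X').symm) (nablaRep unitIter a)) =
        Quot.mk _ a) ∧
    (∀ (X X' : C) (a : IterRep X X'),
      Quot.mk (IterRel _ _)
          (iterMapIso (isoRep (ρ_ X) (ρ_ X').symm) (nablaRep a unitIter)) =
        Quot.mk _ a) ∧
    (∀ (X X' Y Y' : C) (a : IterRep X X') (b : IterRep Y Y'),
      Quot.mk (IterRel _ _)
          (iterMapIso (isoRep (β_ X Y) (β_ X' Y').symm) (nablaRep a b)) =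
        Quot.mk _ (nablaRep b a)) :=
  ⟨fun _ _ _ _ =>
      ⟨Quot.map₂ nablaRep (fun a _ _ hb => iterRel_nablaRep (iterRel_refl a) hb)
        (fun _ _ b ha => iterRel_nablaRep ha (iterRel_refl b)), fun _ _ => rfl⟩,
    fun _ _ _ _ _ _ a b c => Quot.sound (iterRel_associator a b c),
    fun _ _ a => Quot.sound (iterRel_leftUnitor a),
    fun _ _ a => Quot.sound (iterRel_rightUnitor a),
    fun _ _ _ _ a b => Quot.sound (iterRel_braiding a b)⟩
end

section
/- Given a monoidal category M acting on a category C via an actegory structure •, parametrised morphisms form a category (up to 2-cells): the composite of (M, f : M•X → Y) and (N, g : N•Y → Z) with parameter N⊗M and morphism g ∘ (N•f) ∘ α (where α : (N⊗M)•X ≅ N•(M•X)) is associative and unital up to reparametrisation, i.e., Para(C) is a bicategory. -/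
open CategoryTheory MonoidalCategory

universe v₁ v₂ u₁ u₂

/-- An actegory: an action `• : M × C → C` together with coherent unit and
associativity isomorphisms satisfying pentagon and triangle coherence. -/
structure Actegory (M : Type u₁) (C : Type u₂) [Category.{v₁} M] [MonoidalCategory M]
    [Category.{v₂} C] where
  act : M × C ⥤ C
  η : ∀ X : C, act.obj (𝟙_ M, X) ≅ X
  μ : ∀ (m n : M) (X : C), act.obj (m ⊗ n, X) ≅ act.obj (m, act.obj (n, X))
  η_nat : ∀ {X Y : C} (f : X ⟶ Y),
    act.map ((𝟙 (𝟙_ M), f) : (𝟙_ M, X) ⟶ (𝟙_ M, Y)) ≫ (η Y).hom = (η X).hom ≫ f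
  μ_nat : ∀ {m m' n n' : M} {X Y : C} (h : m ⟶ m') (k : n ⟶ n') (f : X ⟶ Y),
    act.map ((h ⊗ₘ k, f) : (m ⊗ n, X) ⟶ (m' ⊗ n', Y)) ≫ (μ m' n' Y).hom =
      (μ m n X).hom ≫ act.map ((h, act.map ((k, f) : (n, X) ⟶ (n', Y))) :
        (m, act.obj (n, X)) ⟶ (m', act.obj (n', Y)))
  pentagon : ∀ (m n p : M) (X : C),
    act.map (((α_ m n p).hom, 𝟙 X) : ((m ⊗ n) ⊗ p, X) ⟶ (m ⊗ (n ⊗ p), X)) ≫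
        (μ m (n ⊗ p) X).hom ≫
        act.map ((𝟙 m, (μ n p X).hom) : (m, act.obj (n ⊗ p, X)) ⟶
          (m, act.obj (n, act.obj (p, X)))) =
      (μ (m ⊗ n) p X).hom ≫ (μ m n (act.obj (p, X))).hom
  triangle : ∀ (m : M) (X : C),
    (μ m (𝟙_ M) X).hom ≫
        act.map ((𝟙 m, (η X).hom) : (m, act.obj (𝟙_ M, X)) ⟶ (m, X)) =
      act.map (((ρ_ m).hom, 𝟙 X) : (m ⊗ 𝟙_ M, X) ⟶ (m, X))

variable {M : Type u₁} {C : Type u₂} [Category.{v₁} M] [MonoidalCategory M]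
  [Category.{v₂} C]

/-- Composite of the parametrised morphisms `(m, f : m•X ⟶ Y)` and
`(n, g : n•Y ⟶ Z)`: parameter `n ⊗ m`, morphism `g ∘ (n•f) ∘ α`. -/
def pComp (A : Actegory M C) {m n : M} {X Y Z : C}
    (f : A.act.obj (m, X) ⟶ Y) (g : A.act.obj (n, Y) ⟶ Z) :
    A.act.obj (n ⊗ m, X) ⟶ Z :=
  (A.μ n m X).hom ≫
    A.act.map ((𝟙 n, f) : (n, A.act.obj (m, X)) ⟶ (n, Y)) ≫ g

/-- The identity parametrised morphism `(I, I•X ≅ X)`. -/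
def pId (A : Actegory M C) (X : C) : A.act.obj (𝟙_ M, X) ⟶ X := (A.η X).hom

/-!
Associativity is the pentagon axiom of the actegory combined with naturality of `μ` in its
`C`-argument, and the left unit law (identity applied first) is its triangle axiom. The right
unit law needs the compatibility `μ_{I,m,X} ≫ η_{m•X} = λ_m • X`, which is not an axiom; as in
Kelly's derivation of the corresponding monoidal identity, it follows from the pentagon and
triangle axioms because `𝟙_ M • -` is faithful, being isomorphic to the identity via `η`.
-/

open scoped CategoryTheory.Prod

namespace CategoryTheory.Functor

variable {C D E : Type*} [Category C] [Category D] [Category E] (F : C × D ⥤ E)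

lemma map_id_prod_comp (c : C) {X Y Z : D} (a : X ⟶ Y) (b : Y ⟶ Z) :
    F.map (𝟙 c ×ₘ (a ≫ b)) = F.map (𝟙 c ×ₘ a) ≫ F.map (𝟙 c ×ₘ b) := by
  rw [← F.map_comp]; simp

lemma map_comp_prod_id {a b c : C} (u : a ⟶ b) (v : b ⟶ c) (X : D) :
    F.map ((u ≫ v) ×ₘ 𝟙 X) = F.map (u ×ₘ 𝟙 X) ≫ F.map (v ×ₘ 𝟙 X) := by
  rw [← F.map_comp]; simp

lemma map_id_prod_id (c : C) (X : D) : F.map (𝟙 c ×ₘ 𝟙 X) = 𝟙 (F.obj (c, X)) :=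
  F.map_id (c, X)

end CategoryTheory.Functor

namespace Actegory

variable (A : Actegory M C)

lemma μ_hom_naturality_right (m n : M) {X Y : C} (f : X ⟶ Y) :
    A.act.map (𝟙 (m ⊗ n) ×ₘ f) ≫ (A.μ m n Y).hom =
      (A.μ m n X).hom ≫ A.act.map (𝟙 m ×ₘ A.act.map (𝟙 n ×ₘ f)) := by
  simpa only [id_tensorHom_id] using A.μ_nat (𝟙 m) (𝟙 n) f

lemma map_id_tensorUnit_prod_injective {X Y : C} {a b : X ⟶ Y}
    (h : A.act.map (𝟙 (𝟙_ M) ×ₘ a) = A.act.map (𝟙 (𝟙_ M) ×ₘ b)) : a = b := by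
  rw [← cancel_epi (A.η X).hom, ← A.η_nat, ← A.η_nat, h]

lemma μ_tensorUnit_hom_comp_η_hom (m : M) (X : C) :
    (A.μ (𝟙_ M) m X).hom ≫ (A.η (A.act.obj (m, X))).hom =
      A.act.map ((λ_ m).hom ×ₘ 𝟙 X) := by
  apply A.map_id_tensorUnit_prod_injective
  rw [← Iso.cancel_iso_hom_left
    (A.act.mapIso ((α_ (𝟙_ M) (𝟙_ M) m).prod (Iso.refl X)) ≪≫ A.μ (𝟙_ M) (𝟙_ M ⊗ m) X)]
  simp only [Iso.trans_hom, Functor.mapIso_hom, Iso.prod_hom, Iso.refl_hom, Category.assoc]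
  trans A.act.map (((ρ_ (𝟙_ M)).hom ▷ m) ×ₘ 𝟙 X) ≫ (A.μ (𝟙_ M) m X).hom
  · rw [Functor.map_id_prod_comp, reassoc_of% A.pentagon, A.triangle]
    have h := A.μ_nat (ρ_ (𝟙_ M)).hom (𝟙 m) (𝟙 X)
    rw [Functor.map_id_prod_id, tensorHom_id] at h
    exact h.symm
  · rw [← A.μ_nat, ← Category.assoc, ← Functor.map_comp_prod_id, id_tensorHom,
      MonoidalCategory.triangle]

end Actegory

section Para

variable (A : Actegory M C)

lemma pComp_assoc {m n p : M} {X Y Z W : C} (f : A.act.obj (m, X) ⟶ Y)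
    (g : A.act.obj (n, Y) ⟶ Z) (h : A.act.obj (p, Z) ⟶ W) :
    pComp A f (pComp A g h) =
      A.act.map ((α_ p n m).hom ×ₘ 𝟙 X) ≫ pComp A (pComp A f g) h := by
  simp only [pComp]
  rw [Functor.map_id_prod_comp, Functor.map_id_prod_comp, reassoc_of% A.μ_hom_naturality_right,
    ← reassoc_of% A.pentagon]
  simp only [Category.assoc]

lemma pId_pComp {m : M} {X Y : C} (f : A.act.obj (m, X) ⟶ Y) :
    pComp A (pId A X) f = A.act.map ((ρ_ m).hom ×ₘ 𝟙 X) ≫ f := by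
  rw [pComp, pId, ← A.triangle, Category.assoc]

lemma pComp_pId {m : M} {X Y : C} (f : A.act.obj (m, X) ⟶ Y) :
    pComp A f (pId A Y) = A.act.map ((λ_ m).hom ×ₘ 𝟙 X) ≫ f := by
  rw [pComp, pId, A.η_nat, ← A.μ_tensorUnit_hom_comp_η_hom, Category.assoc]

end Para

/-- parametrised morphisms over an actegory form a bicategory:
composition is associative and unital up to reparametrisation, the witnessing
reparametrisations being the associator and unitors of `M` (a reparametrisation
`h : m ⟶ m'` from `(m, f)` to `(m', f')` satisfies `f = f' ∘ (h • X)`). -/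
theorem para_bicategory (A : Actegory M C) :
    (∀ {m n p : M} {X Y Z W : C} (f : A.act.obj (m, X) ⟶ Y)
      (g : A.act.obj (n, Y) ⟶ Z) (h : A.act.obj (p, Z) ⟶ W),
      pComp A f (pComp A g h) =
        A.act.map (((α_ p n m).hom, 𝟙 X) : ((p ⊗ n) ⊗ m, X) ⟶ (p ⊗ (n ⊗ m), X)) ≫
          pComp A (pComp A f g) h) ∧
    (∀ {m : M} {X Y : C} (f : A.act.obj (m, X) ⟶ Y),
      pComp A (pId A X) f =
        A.act.map (((ρ_ m).hom, 𝟙 X) : (m ⊗ 𝟙_ M, X) ⟶ (m, X)) ≫ f) ∧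
    (∀ {m : M} {X Y : C} (f : A.act.obj (m, X) ⟶ Y),
      pComp A f (pId A Y) =
        A.act.map (((λ_ m).hom, 𝟙 X) : (𝟙_ M ⊗ m, X) ⟶ (m, X)) ≫ f) :=
  ⟨pComp_assoc A, pId_pComp A, pComp_pId A⟩
end

section
/- Given an iteration element i = (M, (m₀, x₀), step) in I(X, X') over Set and a continuation k : X → X', the corecursively defined sequence ⟨k | i⟩ : ℕ → X, with ⟨k | (M,(m₀,x₀),step)⟩₀ = x₀ and subsequent values obtained by applying step to (m₀, k(x₀)) and recursing, is dinatural: for any lens f = (g : X → Y, g' : X × Y' → X'), and any continuation h : Y → Y', pushing the iteration forward through f and using h agrees with using the pulled-back continuation on the original iteration, i.e., ⟨h | I(f)(i)⟩ = map g ⟨λx. g'(x, h(g(x))) | i⟩. -/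
universe u

/-- An element of `I(X, X')` over `Set`: a state space `M`, an initial state in
`M × X`, and an iterator `M × X' → M × X`. -/
structure IterEl (X X' : Type u) : Type (u + 1) where
  M : Type u
  init : M × X
  step : M × X' → M × X

/-- The corecursively defined output stream `⟨k | i⟩ : ℕ → X`: output the
current `X`-value, feed it through the continuation `k`, apply the iterator,
and recurse. -/
def streamAux {M X X' : Type u} (step : M × X' → M × X) (k : X → X') :
    M × X → ℕ → X
  | st, 0 => st.2
  | st, n + 1 => streamAux step k (step (st.1, k st.2)) n

def stream {X X' : Type u} (k : X → X') (i : IterEl X X') : ℕ → X :=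
  streamAux i.step k i.init

/-- The action `I(f)` of a lens `f = (g, g')` on iteration elements: the state
space also stores the current `X`-value; the new iterator pulls the feedback
back through `g'` and pushes the output forward through `g`. -/
def pushIter {X X' Y Y' : Type u} (g : X → Y) (g' : X × Y' → X')
    (i : IterEl X X') : IterEl Y Y' where
  M := i.M × X
  init := ((i.init.1, i.init.2), g i.init.2)
  step := fun q =>
    let p := i.step (q.1.1, g' (q.1.2, q.2))
    ((p.1, p.2), g p.2)

private lemma aux {X X' Y Y' : Type u} (g : X → Y) (g' : X × Y' → X')
    (h : Y → Y') (i : IterEl X X') (n : ℕ) :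
    ∀ m x, streamAux (pushIter g g' i).step h ((m, x), g x) n =
      g (streamAux i.step (fun x => g' (x, h (g x))) (m, x) n) := by
  induction n with
  | zero => intro m x; rfl
  | succ n ih =>
    intro m x
    simp only [streamAux, pushIter]
    exact ih _ _

/-- dinaturality of the corecursive stream `⟨- | -⟩`: for any
lens `f = (g : X → Y, g' : X × Y' → X')` and continuation `h : Y → Y'`, pushing
the iteration forward through `f` and running it against `h` agrees (pointwise,
hence as streams) with mapping `g` over the run of the original iteration
against the pulled-back continuation `x ↦ g'(x, h(g(x)))`. -/
theorem stream_dinatural {X X' Y Y' : Type u} (g : X → Y) (g' : X × Y' → X')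
    (h : Y → Y') (i : IterEl X X') (n : ℕ) :
    stream h (pushIter g g' i) n =
      g (stream (fun x => g' (x, h (g x))) i n) := by
  unfold stream
  have := aux g g' h i n i.init.1 i.init.2
  simpa [pushIter] using this
end
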